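/- arXiv:2502.08305 — 2 statements merged into one kernel-verified Lean document; each statement's English description precedes it below -/
import Mathlib

section
/- For every positive integer n and real s > 0, one has σ_s(n)/n^s = ζ(s+1)·∑_{r=1}^∞ c_r(n)/r^{s+1}, where the series on the right converges absolutely. -/
/-!
The sequence `r ↦ c_r(n)` is the Dirichlet convolution of `d ↦ d · [d ∣ n]` with `μ`. Hence for
`x = s + 1 > 1` its L-series is `L(μ, x) · ∑_{d ∣ n} d / d^x`, and `ζ(x) · L(μ, x) = 1` leaves
`∑_{d ∣ n} d^(-s)`, which is `σ_s(n) / n^s` after the substitution `d ↦ n / d`. Absolute convergence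
comes for free, the L-series of a convolution of two absolutely convergent ones being absolutely
convergent.
-/

open Finset

/-- The Ramanujan sum `c_r(n)`, via its Möbius-function expression. -/
def ramanujanSum (r n : ℕ) : ℤ :=
  ∑ d ∈ (Nat.gcd n r).divisors, (ArithmeticFunction.moebius (r / d)) * d

open ArithmeticFunction LSeries
open scoped LSeries.notation ArithmeticFunction.Moebius

lemma ramanujanSum_eq_convolution {n : ℕ} (hn : n ≠ 0) :
    (fun r => (ramanujanSum r n : ℂ)) = (n.divisors : Set ℕ).indicator (↑) ⍟ ↗μ := by
  ext r
  rcases eq_or_ne r 0 with rfl | hr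
  · simp [ramanujanSum]
  have hgcd : (Nat.gcd n r).divisors = r.divisors.filter (· ∈ n.divisors) := by
    ext d
    simp only [Nat.mem_divisors, Nat.dvd_gcd_iff, mem_filter, ne_eq, Nat.gcd_eq_zero_iff, hn, hr]
    tauto
  rw [convolution_def]
  dsimp only
  rw [Nat.sum_divisorsAntidiagonal fun a b => (n.divisors : Set ℕ).indicator (↑) a * (μ b : ℂ)]
  simp only [Set.indicator_apply, mem_coe, ite_mul, zero_mul, ← sum_filter, ← hgcd]
  simp [ramanujanSum, mul_comm]

lemma LSeriesHasSum_indicator_finset (S : Finset ℕ) (f : ℕ → ℂ) (s : ℂ) :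
    LSeriesHasSum ((S : Set ℕ).indicator f) s (∑ d ∈ S, term f s d) := by
  have hterm : term ((S : Set ℕ).indicator f) s = (S : Set ℕ).indicator (term f s) := by
    ext n
    by_cases hn : n ∈ S <;> simp [term, hn]
  rw [LSeriesHasSum, hterm]
  exact hasSum_subtype_iff_indicator.mp (S.hasSum (term f s))

lemma LSeriesSummable_ramanujanSum {n : ℕ} (hn : n ≠ 0) {s : ℂ} (hs : 1 < s.re) :
    LSeriesSummable (fun r => (ramanujanSum r n : ℂ)) s := by
  rw [ramanujanSum_eq_convolution hn]
  exact (LSeriesHasSum_indicator_finset _ _ s).LSeriesSummable.convolution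
    (LSeriesSummable_moebius_iff.mpr hs)

lemma riemannZeta_mul_LSeries_ramanujanSum {n : ℕ} (hn : n ≠ 0) {s : ℂ} (hs : 1 < s.re) :
    riemannZeta s * LSeries (fun r => (ramanujanSum r n : ℂ)) s =
      ∑ d ∈ n.divisors, term (↑) s d := by
  have hind := LSeriesHasSum_indicator_finset n.divisors (↑) s
  rw [ramanujanSum_eq_convolution hn, LSeries_convolution' hind.LSeriesSummable
    (LSeriesSummable_moebius_iff.mpr hs), mul_left_comm, ← LSeries_one_eq_riemannZeta hs,
    LSeries_one_mul_Lseries_moebius hs, mul_one, hind.LSeries_eq]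

lemma term_ofReal (f : ℕ → ℝ) (x : ℝ) {r : ℕ} (hr : r ≠ 0) :
    term (fun n => (f n : ℂ)) x r = ((f r / (r : ℝ) ^ x : ℝ) : ℂ) := by
  rw [term_of_ne_zero hr, Complex.ofReal_div, Complex.ofReal_cpow (Nat.cast_nonneg r),
    Complex.ofReal_natCast]

lemma ofReal_tsum_div_rpow_add_one (f : ℕ → ℝ) (x : ℝ) :
    ((∑' r : ℕ, f (r + 1) / ((r : ℝ) + 1) ^ x : ℝ) : ℂ) = LSeries (fun n => (f n : ℂ)) x := by
  have hsupp : Function.support (term (fun n => (f n : ℂ)) x) ⊆ Set.range (· + 1) := by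
    intro n hn
    exact ⟨n.pred, Nat.succ_pred_eq_of_ne_zero (by rintro rfl; exact hn (term_zero ..))⟩
  rw [Complex.ofReal_tsum, LSeries, ← (add_left_injective 1).tsum_eq hsupp]
  exact tsum_congr fun r => by rw [term_ofReal f x r.succ_ne_zero]; push_cast; rfl

lemma LSeriesSummable.summable_abs_div_rpow_add_one {f : ℕ → ℝ} {x : ℝ}
    (h : LSeriesSummable (fun n => (f n : ℂ)) x) :
    Summable fun r : ℕ => |f (r + 1)| / ((r : ℝ) + 1) ^ x := by
  refine ((summable_nat_add_iff 1).mpr (summable_norm_iff.mpr h)).congr fun r => ?_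
  rw [norm_term_eq]
  simp

lemma ofReal_tsum_rpow_neg_add_one {x : ℝ} (hx : 1 < x) :
    ((∑' k : ℕ, ((k : ℝ) + 1) ^ (-x) : ℝ) : ℂ) = riemannZeta x := by
  have h := ofReal_tsum_div_rpow_add_one 1 x
  simp only [Pi.one_apply, Complex.ofReal_one] at h
  rw [← LSeries_one_eq_riemannZeta (by simpa using hx)]
  refine (congrArg _ (tsum_congr fun k => ?_)).trans h
  rw [Real.rpow_neg (by positivity), one_div]

lemma sum_divisors_rpow_div_rpow (n : ℕ) (s : ℝ) :
    (∑ d ∈ n.divisors, (d : ℝ) ^ s) / (n : ℝ) ^ s =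
      ∑ d ∈ n.divisors, (d : ℝ) / (d : ℝ) ^ (s + 1) := by
  rw [← Nat.sum_div_divisors n (fun d => (d : ℝ) / (d : ℝ) ^ (s + 1)), sum_div]
  refine sum_congr rfl fun d hd => ?_
  have hd0 : 0 < d := Nat.pos_of_mem_divisors hd
  have hn : n ≠ 0 := (Nat.mem_divisors.mp hd).2
  have hnd : ((n / d : ℕ) : ℝ) = n / d := Nat.cast_div (Nat.dvd_of_mem_divisors hd) (by positivity)
  have : (0 : ℝ) < n / d := by positivity
  rw [hnd, Real.rpow_add_one this.ne', div_mul_cancel_right₀ this.ne',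
    Real.div_rpow (by positivity) (by positivity), inv_div]

theorem stmt_10 (n : ℕ) (hn : 0 < n) (s : ℝ) (hs : 0 < s) :
    Summable (fun r : ℕ => |(ramanujanSum (r + 1) n : ℝ)| / ((r : ℝ) + 1) ^ (s + 1))
    ∧ (∑ d ∈ n.divisors, (d : ℝ) ^ s) / (n : ℝ) ^ s
      = (∑' k : ℕ, ((k : ℝ) + 1) ^ (-(s + 1)))
        * ∑' r : ℕ, (ramanujanSum (r + 1) n : ℝ) / ((r : ℝ) + 1) ^ (s + 1) := by
  have hx : 1 < ((s + 1 : ℝ) : ℂ).re := by simpa using hs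
  have hsum : LSeriesSummable (fun r => ((ramanujanSum r n : ℝ) : ℂ)) (s + 1 : ℝ) := by
    simpa using LSeriesSummable_ramanujanSum hn.ne' hx
  refine ⟨hsum.summable_abs_div_rpow_add_one, Complex.ofReal_injective ?_⟩
  rw [sum_divisors_rpow_div_rpow, Complex.ofReal_mul, ofReal_tsum_rpow_neg_add_one (by linarith),
    ofReal_tsum_div_rpow_add_one (fun r => (ramanujanSum r n : ℝ))]
  simp only [Complex.ofReal_intCast]
  rw [riemannZeta_mul_LSeries_ramanujanSum hn.ne' hx, Complex.ofReal_sum]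
  refine sum_congr rfl fun d hd => ?_
  rw [← term_ofReal _ _ (Nat.pos_of_mem_divisors hd).ne']
  simp
end

section
/- There exists a constant C such that for every positive integer N, ∑_{d | N} (log d)/d ≤ C·σ_{−1}(N)·log log(N + 2). -/
/-!
Write `log n / n` as the Dirichlet convolution of `Λ(n) / n` with `1 / n`. Summing a convolution
of nonnegative functions over the divisors of `N` gives at most the product of the two divisor
sums, so the left side is at most `σ₋₁(N) ∑_{m ∣ N} Λ(m) / m ≤ 2 σ₋₁(N) ∑_{p ∣ N} log p / p`.
Splitting the primes at `x = log (N + 2)`, those up to `x` contribute at most `log x + log 4` by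
the Chebyshev–Mertens bound `∑_{p ≤ n} log p / p ≤ log n + log 4` (Legendre's formula for `n!`),
and those above `x` contribute at most `log N / x ≤ 1`, since their product divides `N`.
-/

open Finset
open scoped Nat

namespace ArithmeticFunction

open scoped ArithmeticFunction.zeta

theorem sum_divisors_mul_le {R : Type*} [CommSemiring R] [PartialOrder R] [IsOrderedRing R]
    {f g : ArithmeticFunction R} (hf : ∀ n, 0 ≤ f n) (hg : ∀ n, 0 ≤ g n) (N : ℕ) :
    ∑ d ∈ N.divisors, (f * g) d ≤ (∑ d ∈ N.divisors, f d) * ∑ d ∈ N.divisors, g d := by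
  rcases eq_or_ne N 0 with rfl | hN
  · simp
  calc ∑ d ∈ N.divisors, (f * g) d
      = ∑ x ∈ N.divisorsAntidiagonal, f x.1 * ∑ e ∈ x.2.divisors, g e := by
        -- `((f * g) * ζ) N = (f * (g * ζ)) N`
        rw [← coe_mul_zeta_apply, mul_assoc, mul_apply]
        simp only [coe_mul_zeta_apply]
    _ ≤ ∑ x ∈ N.divisorsAntidiagonal, f x.1 * ∑ e ∈ N.divisors, g e := by
        gcongr with x hx
        · exact hf _
        · exact fun e _ _ => hg e
        · exact Nat.dvd_of_mem_divisors (Nat.snd_mem_divisors_of_mem_antidiagonal hx)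
    _ = (∑ d ∈ N.divisors, f d) * ∑ d ∈ N.divisors, g d := by
        rw [Nat.sum_divisorsAntidiagonal (fun a _ => f a * _), sum_mul]

theorem mul_pdiv_of_map_mul {R : Type*} [Semifield R] (f g h : ArithmeticFunction R)
    (hh : ∀ a b, h (a * b) = h a * h b) : (f * g).pdiv h = f.pdiv h * g.pdiv h := by
  ext n
  simp only [pdiv_apply, mul_apply, sum_div]
  refine sum_congr rfl fun x hx => ?_
  rw [← (Nat.mem_divisorsAntidiagonal.1 hx).1, hh, mul_div_mul_comm]

theorem sum_divisors_log_div_le (N : ℕ) :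
    ∑ d ∈ N.divisors, Real.log d / d
      ≤ (∑ d ∈ N.divisors, (1 : ℝ) / d) * ∑ m ∈ N.divisors, Λ m / m := by
  let ι : ArithmeticFunction ℝ := ↑ArithmeticFunction.id
  have hι (n : ℕ) : ι n = n := by simp [ι]
  have hι_mul (a b : ℕ) : ι (a * b) = ι a * ι b := by simp only [hι, Nat.cast_mul]
  calc ∑ d ∈ N.divisors, Real.log d / d
      = ∑ d ∈ N.divisors, (vonMangoldt.pdiv ι * (ζ : ArithmeticFunction ℝ).pdiv ι) d := by
        rw [← mul_pdiv_of_map_mul _ _ _ hι_mul, vonMangoldt_mul_zeta]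
        simp only [pdiv_apply, log_apply, hι]
    _ ≤ (∑ m ∈ N.divisors, vonMangoldt.pdiv ι m)
          * ∑ d ∈ N.divisors, (ζ : ArithmeticFunction ℝ).pdiv ι d :=
        sum_divisors_mul_le (fun n => by rw [pdiv_apply, hι]; positivity)
          (fun n => by rw [pdiv_apply, natCoe_apply, hι]; positivity) N
    _ = (∑ d ∈ N.divisors, (1 : ℝ) / d) * ∑ m ∈ N.divisors, Λ m / m := by
        rw [mul_comm]
        congr 1
        refine sum_congr rfl fun d hd => ?_
        simp [hι, (Nat.pos_of_mem_divisors hd).ne']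

theorem sum_Ico_vonMangoldt_pow_div_le {p : ℕ} (hp : p.Prime) (K : ℕ) :
    ∑ a ∈ Ico 1 K, Λ (p ^ a) / (p ^ a : ℕ) ≤ 2 * (Real.log p / p) := by
  have hp2 : (2 : ℝ) ≤ p := by exact_mod_cast hp.two_le
  have hr : (p : ℝ)⁻¹ ≤ 1 / 2 := by rw [inv_le_comm₀ (by positivity) (by norm_num)]; linarith
  have hlog : 0 ≤ Real.log p := Real.log_nonneg (by linarith)
  calc ∑ a ∈ Ico 1 K, Λ (p ^ a) / (p ^ a : ℕ)
      = Real.log p * ∑ a ∈ Ico 1 K, (p : ℝ)⁻¹ ^ a := by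
        rw [mul_sum]
        refine sum_congr rfl fun a ha => ?_
        rw [vonMangoldt_apply_pow (Nat.one_le_iff_ne_zero.1 (mem_Ico.1 ha).1),
          vonMangoldt_apply_prime hp]
        push_cast
        ring
    _ ≤ Real.log p * ((p : ℝ)⁻¹ ^ 1 / (1 - (p : ℝ)⁻¹)) :=
        mul_le_mul_of_nonneg_left (geom_sum_Ico_le_of_lt_one (by positivity) (by linarith)) hlog
    _ ≤ Real.log p * (2 * (p : ℝ)⁻¹) := by
        refine mul_le_mul_of_nonneg_left ?_ hlog
        rw [pow_one, div_le_iff₀ (by linarith)]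
        nlinarith [inv_nonneg.2 (by positivity : (0 : ℝ) ≤ p)]
    _ = 2 * (Real.log p / p) := by ring

theorem sum_divisors_vonMangoldt_div_le (N : ℕ) :
    ∑ m ∈ N.divisors, Λ m / m ≤ 2 * ∑ p ∈ N.primeFactors, Real.log p / p := by
  rcases eq_or_ne N 0 with rfl | hN
  · simp
  have hnonneg : ∀ m : ℕ, 0 ≤ Λ m / m := fun m => div_nonneg vonMangoldt_nonneg m.cast_nonneg
  have hcover : {m ∈ N.divisors | IsPrimePow m}
      ⊆ (N.primeFactors ×ˢ Ico 1 (N + 1)).image fun q => q.1 ^ q.2 := by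
    intro m hm
    obtain ⟨hm, hpow⟩ := mem_filter.1 hm
    obtain ⟨p, k, hp, hk, rfl⟩ := (isPrimePow_nat_iff _).1 hpow
    have hpkN : p ^ k ≤ N := Nat.le_of_dvd (Nat.pos_of_ne_zero hN) (Nat.dvd_of_mem_divisors hm)
    refine mem_image.2 ⟨(p, k), mem_product.2 ⟨?_, mem_Ico.2 ⟨hk, ?_⟩⟩, rfl⟩
    · exact hp.mem_primeFactors ((dvd_pow_self p hk.ne').trans (Nat.dvd_of_mem_divisors hm)) hN
    · exact Nat.lt_succ_of_le ((Nat.lt_pow_self hp.one_lt).le.trans hpkN)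
  calc ∑ m ∈ N.divisors, Λ m / m
      = ∑ m ∈ N.divisors with IsPrimePow m, Λ m / m :=
        (sum_filter_of_ne fun m _ h => vonMangoldt_ne_zero_iff.1 (left_ne_zero_of_mul h)).symm
    _ ≤ ∑ m ∈ (N.primeFactors ×ˢ Ico 1 (N + 1)).image (fun q => q.1 ^ q.2), Λ m / m :=
        sum_le_sum_of_subset_of_nonneg hcover fun m _ _ => hnonneg m
    _ ≤ ∑ q ∈ N.primeFactors ×ˢ Ico 1 (N + 1), Λ (q.1 ^ q.2) / (q.1 ^ q.2 : ℕ) :=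
        sum_image_le_of_nonneg fun m _ => hnonneg m
    _ ≤ ∑ p ∈ N.primeFactors, 2 * (Real.log p / p) := by
        rw [sum_product]
        exact sum_le_sum fun p hp =>
          sum_Ico_vonMangoldt_pow_div_le (Nat.prime_of_mem_primeFactors hp) _
    _ = 2 * ∑ p ∈ N.primeFactors, Real.log p / p := (mul_sum ..).symm

end ArithmeticFunction


theorem Nat.div_le_factorization_factorial {p : ℕ} (hp : p.Prime) (n : ℕ) :
    n / p ≤ (n !).factorization p := by
  have : Fact p.Prime := ⟨hp⟩
  rw [Nat.factorization_def _ hp, ← padicValNat_mul_div_factorial, padicValNat_factorial_mul]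
  exact Nat.le_add_left _ _

theorem log_factorial_eq_sum_primesLE (n : ℕ) :
    Real.log n ! = ∑ p ∈ Nat.primesLE n, ((n !).factorization p : ℝ) * Real.log p := by
  rw [Real.log_nat_eq_sum_factorization]
  refine Finsupp.sum_of_support_subset _ (fun p hp => ?_) _ (by simp)
  have hp' : p.Prime := Nat.prime_of_mem_primeFactors hp
  exact Nat.mem_primesLE.2 ⟨(hp'.dvd_factorial).1 (Nat.dvd_of_mem_primeFactors hp), hp'⟩

theorem sum_primesLE_log_div_le (n : ℕ) :
    ∑ p ∈ Nat.primesLE n, Real.log p / p ≤ Real.log n + Real.log 4 := by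
  rcases eq_or_ne n 0 with rfl | hn
  · simp [Nat.primesLE_zero]; positivity
  have hn' : (0 : ℝ) < n := by positivity
  have hterm : ∀ p ∈ Nat.primesLE n, (n : ℝ) * (Real.log p / p)
      ≤ ((n !).factorization p : ℝ) * Real.log p + Real.log p := by
    intro p hp
    have hp' := Nat.prime_of_mem_primesLE hp
    have hp0 : (0 : ℝ) < p := by exact_mod_cast hp'.pos
    have hfloor : (n : ℝ) / p ≤ (n / p : ℕ) + 1 := by
      rw [div_le_iff₀ hp0]
      have := (Nat.lt_div_mul_add (a := n) hp'.pos).le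
      push_cast [add_mul, one_mul]
      exact_mod_cast this
    have hlegendre : ((n / p : ℕ) : ℝ) ≤ (n !).factorization p := by
      exact_mod_cast Nat.div_le_factorization_factorial hp' n
    calc (n : ℝ) * (Real.log p / p) = n / p * Real.log p := by ring
      _ ≤ ((n !).factorization p + 1) * Real.log p := by
          gcongr
          linarith
      _ = _ := by ring
  have hlog_factorial : Real.log n ! ≤ n * Real.log n := by
    rw [← Real.log_pow]
    exact Real.log_le_log (by positivity) (by exact_mod_cast Nat.factorial_le_pow n)
  have htheta : ∑ p ∈ Nat.primesLE n, Real.log p ≤ Real.log 4 * n := by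
    rw [← Chebyshev.theta_eq_sum_primesLE_log]
    exact Chebyshev.theta_le_log4_mul_x n.cast_nonneg
  refine le_of_mul_le_mul_left ?_ hn'
  calc (n : ℝ) * ∑ p ∈ Nat.primesLE n, Real.log p / p
      ≤ ∑ p ∈ Nat.primesLE n, (((n !).factorization p : ℝ) * Real.log p + Real.log p) := by
        rw [mul_sum]; exact sum_le_sum hterm
    _ = Real.log n ! + ∑ p ∈ Nat.primesLE n, Real.log p := by
        rw [sum_add_distrib, log_factorial_eq_sum_primesLE]
    _ ≤ n * (Real.log n + Real.log 4) := by linarith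

theorem sum_primeFactors_log_le (N : ℕ) : ∑ p ∈ N.primeFactors, Real.log p ≤ Real.log N := by
  rcases eq_or_ne N 0 with rfl | hN
  · simp
  have hpos : ∀ p ∈ N.primeFactors, (0 : ℝ) < p :=
    fun p hp => by exact_mod_cast (Nat.prime_of_mem_primeFactors hp).pos
  rw [← Real.log_prod fun p hp => (hpos p hp).ne']
  refine Real.log_le_log (prod_pos hpos) ?_
  rw [← Nat.cast_prod]
  exact_mod_cast Nat.le_of_dvd (Nat.pos_of_ne_zero hN) (Nat.prod_primeFactors_dvd N)

theorem sum_primeFactors_log_div_le (N : ℕ) {x : ℝ} (hx : 1 ≤ x) :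
    ∑ p ∈ N.primeFactors, Real.log p / p ≤ Real.log x + Real.log 4 + Real.log N / x := by
  have hx0 : 0 < x := by linarith
  have hnonneg : ∀ p : ℕ, 0 ≤ Real.log p / p :=
    fun p => div_nonneg (Real.log_natCast_nonneg p) p.cast_nonneg
  have hsmall : ∑ p ∈ N.primeFactors with p ≤ ⌊x⌋₊, Real.log p / p ≤ Real.log x + Real.log 4 :=
    calc ∑ p ∈ N.primeFactors with p ≤ ⌊x⌋₊, Real.log p / p
        ≤ ∑ p ∈ Nat.primesLE ⌊x⌋₊, Real.log p / p := by
          refine sum_le_sum_of_subset_of_nonneg (fun p hp => ?_) fun p _ _ => hnonneg p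
          obtain ⟨hpN, hpx⟩ := mem_filter.1 hp
          exact Nat.mem_primesLE.2 ⟨hpx, Nat.prime_of_mem_primeFactors hpN⟩
      _ ≤ Real.log ⌊x⌋₊ + Real.log 4 := sum_primesLE_log_div_le _
      _ ≤ Real.log x + Real.log 4 := by
          gcongr
          · exact_mod_cast Nat.floor_pos.2 hx
          · exact Nat.floor_le hx0.le
  have hlarge : ∑ p ∈ N.primeFactors with ¬p ≤ ⌊x⌋₊, Real.log p / p ≤ Real.log N / x :=
    calc ∑ p ∈ N.primeFactors with ¬p ≤ ⌊x⌋₊, Real.log p / p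
        ≤ ∑ p ∈ N.primeFactors with ¬p ≤ ⌊x⌋₊, Real.log p / x := by
          refine sum_le_sum fun p hp => ?_
          have hxp : x ≤ p := (Nat.floor_lt hx0.le).1 (not_le.1 (mem_filter.1 hp).2) |>.le
          exact div_le_div_of_nonneg_left (Real.log_natCast_nonneg p) hx0 hxp
      _ ≤ ∑ p ∈ N.primeFactors, Real.log p / x :=
          sum_le_sum_of_subset_of_nonneg (filter_subset _ _)
            fun p _ _ => div_nonneg (Real.log_natCast_nonneg p) hx0.le
      _ ≤ Real.log N / x := by
          rw [← sum_div]
          exact div_le_div_of_nonneg_right (sum_primeFactors_log_le N) hx0.le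
  rw [← sum_filter_add_sum_filter_not N.primeFactors (· ≤ ⌊x⌋₊)]
  linarith

theorem sum_primeFactors_log_div_le_log_log {N : ℕ} (hN : 0 < N) :
    ∑ p ∈ N.primeFactors, Real.log p / p ≤ Real.log (Real.log (N + 2)) + Real.log 4 + 1 := by
  have hN3 : (3 : ℝ) ≤ N + 2 := by linarith [(Nat.one_le_cast (α := ℝ)).2 hN]
  have hx : 1 ≤ Real.log (N + 2) := by
    rw [Real.le_log_iff_exp_le (by positivity)]
    linarith [Real.exp_one_lt_d9]
  have hlarge : Real.log N / Real.log (N + 2) ≤ 1 :=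
    div_le_one_of_le₀ (Real.log_le_log (by positivity) (by linarith)) (by linarith)
  linarith [sum_primeFactors_log_div_le N hx]

open scoped ArithmeticFunction.vonMangoldt

theorem stmt_13 :
    ∃ C : ℝ, ∀ N : ℕ, 0 < N →
      ∑ d ∈ N.divisors, Real.log d / d
        ≤ C * (∑ d ∈ N.divisors, (1 : ℝ) / d) * Real.log (Real.log (N + 2)) := by
  set c := Real.log (Real.log 3)
  have hlog3 : 1 < Real.log 3 := by
    rw [Real.lt_log_iff_exp_lt (by norm_num)]
    linarith [Real.exp_one_lt_d9]
  have hc : 0 < c := Real.log_pos hlog3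
  refine ⟨2 * (1 + (Real.log 4 + 1) / c), fun N hN => ?_⟩
  set L := Real.log (Real.log (N + 2))
  have hcL : c ≤ L := by
    have : (3 : ℝ) ≤ N + 2 := by linarith [(Nat.one_le_cast (α := ℝ)).2 hN]
    exact Real.log_le_log (by linarith) (Real.log_le_log (by norm_num) this)
  have hconst : Real.log 4 + 1 ≤ (Real.log 4 + 1) / c * L := by
    rw [div_mul_eq_mul_div, le_div_iff₀ hc]
    exact mul_le_mul_of_nonneg_left hcL (by positivity)
  calc ∑ d ∈ N.divisors, Real.log d / d
      ≤ (∑ d ∈ N.divisors, (1 : ℝ) / d) * ∑ m ∈ N.divisors, Λ m / m :=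
        ArithmeticFunction.sum_divisors_log_div_le N
    _ ≤ (∑ d ∈ N.divisors, (1 : ℝ) / d) * (2 * ((1 + (Real.log 4 + 1) / c) * L)) := by
        gcongr
        linarith [ArithmeticFunction.sum_divisors_vonMangoldt_div_le N,
          sum_primeFactors_log_div_le_log_log hN]
    _ = _ := by ring
end
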